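/- For every i ∈ I = {1,…,n−1}, the twisted commutator [x_i⁻(0), x_θ⁻(1)]_{c_i} = x_i⁻(0)·x_θ⁻(1) − c_i·x_θ⁻(1)·x_i⁻(0) vanishes in 𝒰, where c_i = ⟨ω_i', ω_θ⟩ = ∏_{j∈I} ⟨i,j⟩; explicitly c₁ = s^{−1}, c_{n−1} = r, and c_i = 1 for 1 < i < n−1. -/

import Mathlib

noncomputable section

set_option synthInstance.maxHeartbeats 1000000
set_option maxHeartbeats 1000000

open scoped TensorProduct

/-- The base field `K = ℚ(r^{1/2}, s^{1/2})`. -/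
abbrev Kf : Type := FractionRing (MvPolynomial (Fin 2) ℚ)

/-- `r^{1/2}`. -/
def rh : Kf := algebraMap (MvPolynomial (Fin 2) ℚ) Kf (MvPolynomial.X 0)
/-- `s^{1/2}`. -/
def sh : Kf := algebraMap (MvPolynomial (Fin 2) ℚ) Kf (MvPolynomial.X 1)
/-- `r = (r^{1/2})^2`. -/
def rr : Kf := rh ^ 2
/-- `s = (s^{1/2})^2`. -/
def ss : Kf := sh ^ 2

/-- the `q`-twisted commutator `[x, y]_q = x y - q (y x)`. -/
def qbr {A : Type} [Ring A] [Algebra Kf A] (q : Kf) (x y : A) : A := x * y - q • (y * x)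

/-- integer powers using a chosen generator and its chosen inverse. -/
def zpw {A : Type} [Monoid A] (x xi : A) (k : ℤ) : A :=
  if 0 ≤ k then x ^ k.toNat else xi ^ (-k).toNat

/-- left-nested twisted bracket `[⋯[[g a, g (a+1)]_q, g (a+2)]_q, …, g (b-1)]_q`. -/
def nestL {A : Type} [Ring A] [Algebra Kf A] (q : Kf) (g : ℕ → A) (a : ℕ) : ℕ → A
  | 0 => 0
  | b+1 => if b ≤ a then g a else qbr q (nestL q g a b) (g b)

/-- right-nested twisted bracket `[g (b-1), …, [g (a+2), [g (a+1), g a]_q]_q ⋯]_q`. -/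
def nestR {A : Type} [Ring A] [Algebra Kf A] (q : Kf) (g : ℕ → A) (a : ℕ) : ℕ → A
  | 0 => 0
  | b+1 => if b ≤ a then g a else qbr q (g b) (nestR q g a b)

/-- Coefficients of `exp (∑_{ℓ ≥ 1} c ℓ z^ℓ)`, computed by the Newton-type recursion
`m E_m = ∑_{ℓ=1}^{m} ℓ · (c ℓ) · E_{m-ℓ}` (valid whenever the `c ℓ` pairwise commute). -/
def expCoeff {A : Type} [Ring A] [Algebra Kf A] (c : ℕ → A) : ℕ → A
  | 0 => 1
  | m+1 => (((m+1 : ℕ) : Kf))⁻¹ •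
      ∑ l ∈ Finset.range (m+1), (((l+1 : ℕ) : Kf)) • (c (l+1) * expCoeff c (m - l))
  termination_by m => m
  decreasing_by omega

/-- `(ε_j, α_i)` for `j ∈ {1,…,n}`, `i ∈ I₀ = {0,…,n-1}`. -/
def epsAlpha (n j i : ℕ) : ℤ :=
  if i = 0 then (if j = n then 1 else 0) - (if j = 1 then 1 else 0)
  else (if j = i then 1 else 0) - (if j = i + 1 then 1 else 0)

/-- `⟨ω_i', ω_j⟩` for `i, j ∈ I₀`:  `r^{(ε_j,α_i)} s^{(ε_{j+1},α_i)}` for `j ∈ I`, and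
`r^{-(ε_{i+1},α₀)} s^{(ε₁,α_i)}` for `j = 0`. -/
def pairO (n i j : ℕ) : Kf :=
  if j = 0 then rr ^ (-(epsAlpha n (i+1) 0)) * ss ^ (epsAlpha n 1 i)
  else rr ^ (epsAlpha n j i) * ss ^ (epsAlpha n (j+1) i)

/-- the coefficient in relation (A3): `s^{(ε_j,α_i)} r^{(ε_{j+1},α_i)}` resp.
`s^{-(ε_{i+1},α₀)} r^{(ε₁,α_i)}`. -/
def pairO' (n i j : ℕ) : Kf :=
  if j = 0 then ss ^ (-(epsAlpha n (i+1) 0)) * rr ^ (epsAlpha n 1 i)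
  else ss ^ (epsAlpha n j i) * rr ^ (epsAlpha n (j+1) i)

/-- `⟨i,j⟩^{1/2} = r^{(ε_j,α_i)/2} s^{(ε_{j+1},α_i)/2}` for `i, j ∈ I` (translation invariant). -/
def prH (i j : ℤ) : Kf :=
  if j = i then rh * sh⁻¹ else if j = i + 1 then rh⁻¹ else if j = i - 1 then sh else 1

/-- the structure constants `⟨i,j⟩ = r^{(ε_j,α_i)} s^{(ε_{j+1},α_i)}` for `i, j ∈ I`. -/
def pr (i j : ℤ) : Kf := (prH i j) ^ 2

/-- the Cartan matrix of `sl_n` (entries only depend on the difference of indices). -/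
def aC (i j : ℤ) : ℤ := if i = j then 2 else if (i - j).natAbs = 1 then -1 else 0

/-- the scalar `(rs)^{|ℓ|/2} (⟨i,i⟩^{ℓ a_{ij}/2} - ⟨i,i⟩^{-ℓ a_{ij}/2}) / (d (r-s))`. -/
def braceC (i j : ℤ) (l : ℤ) (d : ℤ) : Kf :=
  ((rh * sh) ^ |l| * ((rh * sh⁻¹) ^ (l * aC i j) - (rh * sh⁻¹) ^ (-(l * aC i j)))) /
    ((d : Kf) * (rr - ss))
/-! ## The two-parameter quantum affine algebra `U_{r,s}(̂sl_n)` (Definition 2.1) -/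

/-- the Chevalley-Kac-Lusztig generators of `U_{r,s}(̂sl_n)`. -/
inductive UGen (n : ℕ) : Type
  | e  : Fin n → UGen n
  | f  : Fin n → UGen n
  | w  : Fin n → UGen n
  | wi : Fin n → UGen n
  | w' : Fin n → UGen n
  | w'i : Fin n → UGen n
  | gh : UGen n
  | ghi : UGen n
  | g'h : UGen n
  | g'hi : UGen n
  | dd : UGen n
  | ddi : UGen n
  | dd' : UGen n
  | dd'i : UGen n

namespace UGen

/-- toral (group-like) generators. -/
def toral {n : ℕ} : UGen n → Prop
  | .e _ => False
  | .f _ => False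
  | _ => True

/-- the generators `γ^{±1/2}, γ'^{±1/2}`. -/
def isGamma {n : ℕ} : UGen n → Prop
  | .gh => True
  | .ghi => True
  | .g'h => True
  | .g'hi => True
  | _ => False

/-- mutually inverse pairs of generators. -/
def invPair {n : ℕ} : UGen n → UGen n → Prop
  | .w i, .wi j => i = j
  | .wi i, .w j => i = j
  | .w' i, .w'i j => i = j
  | .w'i i, .w' j => i = j
  | .gh, .ghi => True
  | .ghi, .gh => True
  | .g'h, .g'hi => True
  | .g'hi, .g'h => True
  | .dd, .ddi => True
  | .ddi, .dd => True
  | .dd', .dd'i => True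
  | .dd'i, .dd' => True
  | _, _ => False

end UGen

namespace Upre

variable (n : ℕ)

/-- the free algebra on the generators. -/
abbrev F (n : ℕ) := FreeAlgebra Kf (UGen n)

def E (i : Fin n) : F n := FreeAlgebra.ι Kf (UGen.e i)
def Fm (i : Fin n) : F n := FreeAlgebra.ι Kf (UGen.f i)
def W (i : Fin n) : F n := FreeAlgebra.ι Kf (UGen.w i)
def W' (i : Fin n) : F n := FreeAlgebra.ι Kf (UGen.w' i)
def Gh : F n := FreeAlgebra.ι Kf UGen.gh
def G'h : F n := FreeAlgebra.ι Kf UGen.g'h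
def Dd : F n := FreeAlgebra.ι Kf UGen.dd
def Dd' : F n := FreeAlgebra.ι Kf UGen.dd'

end Upre

/-- adjacency in the affine Dynkin diagram of type `A_{n-1}^{(1)}` (a cycle on `I₀`). -/
def affAdj (n : ℕ) (i j : Fin n) : Prop :=
  (i.val + 1) % n = j.val ∨ (j.val + 1) % n = i.val

open Upre in
/-- the defining relations (A1)–(A7) of `U_{r,s}(̂sl_n)`. -/
inductive URel (n : ℕ) : Upre.F n → Upre.F n → Prop
  | inv (g h : UGen n) (hp : g.invPair h) :
      URel n (FreeAlgebra.ι Kf g * FreeAlgebra.ι Kf h) 1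
  | toralComm (g h : UGen n) (hg : g.toral) (hh : h.toral) :
      URel n (FreeAlgebra.ι Kf g * FreeAlgebra.ι Kf h) (FreeAlgebra.ι Kf h * FreeAlgebra.ι Kf g)
  | gammaCentral (c g : UGen n) (hc : c.isGamma) :
      URel n (FreeAlgebra.ι Kf c * FreeAlgebra.ι Kf g) (FreeAlgebra.ι Kf g * FreeAlgebra.ι Kf c)
  | gammaProd : URel n (Gh n * Gh n) (((List.finRange n).map (W n)).prod)
  | gamma'Prod : URel n (G'h n * G'h n) (((List.finRange n).map (W' n)).prod)
  | gammaGamma' : URel n (Gh n * Gh n * (G'h n * G'h n)) ((rr * ss) • 1)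
  -- (A2)
  | dE (i : Fin n) : URel n (Dd n * E n i) ((if i.val = 0 then rr else 1) • (E n i * Dd n))
  | dF (i : Fin n) : URel n (Dd n * Fm n i) ((if i.val = 0 then rr⁻¹ else 1) • (Fm n i * Dd n))
  | wE (i j : Fin n) : URel n (W n j * E n i) (pairO n i j • (E n i * W n j))
  | wF (i j : Fin n) : URel n (W n j * Fm n i) ((pairO n i j)⁻¹ • (Fm n i * W n j))
  -- (A3)
  | d'E (i : Fin n) : URel n (Dd' n * E n i) ((if i.val = 0 then ss else 1) • (E n i * Dd' n))
  | d'F (i : Fin n) : URel n (Dd' n * Fm n i) ((if i.val = 0 then ss⁻¹ else 1) • (Fm n i * Dd' n))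
  | w'E (i j : Fin n) : URel n (W' n j * E n i) (pairO' n i j • (E n i * W' n j))
  | w'F (i j : Fin n) : URel n (W' n j * Fm n i) ((pairO' n i j)⁻¹ • (Fm n i * W' n j))
  -- (A4)
  | ef (i j : Fin n) : URel n (E n i * Fm n j - Fm n j * E n i)
      (if i = j then (rr - ss)⁻¹ • (W n i - W' n i) else 0)
  -- (A5)
  | ee (i j : Fin n) (hne : i ≠ j) (h : ¬ affAdj n i j) : URel n (E n i * E n j) (E n j * E n i)
  | ff (i j : Fin n) (hne : i ≠ j) (h : ¬ affAdj n i j) :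
      URel n (Fm n i * Fm n j) (Fm n j * Fm n i)
  -- (A6)
  | se1 (i j : Fin n) (h : j.val = (i.val + 1) % n) :
      URel n (E n i * E n i * E n j - (rr + ss) • (E n i * E n j * E n i)
      + (rr * ss) • (E n j * (E n i * E n i))) 0
  | se2 (i j : Fin n) (h : j.val = (i.val + 1) % n) :
      URel n (E n i * (E n j * E n j)
      - (rr + ss) • (E n j * E n i * E n j)
      + (rr * ss) • (E n j * E n j * E n i)) 0
  -- (A7)
  | sf1 (i j : Fin n) (h : j.val = (i.val + 1) % n) :
      URel n (Fm n i * Fm n i * Fm n j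
      - (rr⁻¹ + ss⁻¹) • (Fm n i * Fm n j * Fm n i)
      + (rr * ss)⁻¹ • (Fm n j * (Fm n i * Fm n i))) 0
  | sf2 (i j : Fin n) (h : j.val = (i.val + 1) % n) :
      URel n (Fm n i * (Fm n j * Fm n j)
      - (rr⁻¹ + ss⁻¹) • (Fm n j * Fm n i * Fm n j)
      + (rr * ss)⁻¹ • (Fm n j * Fm n j * Fm n i)) 0

/-- the two-parameter quantum affine algebra `U_{r,s}(̂sl_n)` of Definition 2.1. -/
abbrev Uq (n : ℕ) := RingQuot (URel n)

namespace Uq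

variable (n : ℕ)

/-- the canonical projection. -/
def mk : Upre.F n →ₐ[Kf] Uq n := RingQuot.mkAlgHom Kf (URel n)

def ue (i : Fin n) : Uq n := mk n (Upre.E n i)
def uf (i : Fin n) : Uq n := mk n (Upre.Fm n i)
def uw (i : Fin n) : Uq n := mk n (Upre.W n i)
def uwi (i : Fin n) : Uq n := mk n (FreeAlgebra.ι Kf (UGen.wi i))
def uw' (i : Fin n) : Uq n := mk n (Upre.W' n i)
def uw'i (i : Fin n) : Uq n := mk n (FreeAlgebra.ι Kf (UGen.w'i i))
def ugh : Uq n := mk n (Upre.Gh n)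
def ughi : Uq n := mk n (FreeAlgebra.ι Kf UGen.ghi)
def ug'h : Uq n := mk n (Upre.G'h n)
def ug'hi : Uq n := mk n (FreeAlgebra.ι Kf UGen.g'hi)
def ud : Uq n := mk n (Upre.Dd n)
def udi : Uq n := mk n (FreeAlgebra.ι Kf UGen.ddi)
def ud' : Uq n := mk n (Upre.Dd' n)
def ud'i : Uq n := mk n (FreeAlgebra.ι Kf UGen.dd'i)

/-- `γ = (γ^{1/2})²`. -/
def uγ : Uq n := ugh n * ugh n
def uγi : Uq n := ughi n * ughi n
def uγ' : Uq n := ug'h n * ug'h n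
def uγ'i : Uq n := ug'hi n * ug'hi n

/-- the positive nilpotent subalgebra `U_{r,s}(̂n)`. -/
def Nplus : Subalgebra Kf (Uq n) := Algebra.adjoin Kf (Set.range (ue n))
/-- the negative nilpotent subalgebra `U_{r,s}(̂n⁻)`. -/
def Nminus : Subalgebra Kf (Uq n) := Algebra.adjoin Kf (Set.range (uf n))
/-- the toral subalgebra `U⁰`. -/
def Utoral : Subalgebra Kf (Uq n) := Algebra.adjoin Kf
  (Set.range (uw n) ∪ Set.range (uwi n) ∪ Set.range (uw' n) ∪ Set.range (uw'i n) ∪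
    {ugh n, ughi n, ug'h n, ug'hi n, ud n, udi n, ud' n, ud'i n})

/-- the Hopf subalgebra `B̂`. -/
def Bhat : Subalgebra Kf (Uq n) := Algebra.adjoin Kf
  (Set.range (ue n) ∪ Set.range (uw n) ∪ Set.range (uwi n) ∪
    {ugh n, ughi n, ud n, udi n})

/-- the Hopf subalgebra `B̂'`. -/
def Bhat' : Subalgebra Kf (Uq n) := Algebra.adjoin Kf
  (Set.range (uf n) ∪ Set.range (uw' n) ∪ Set.range (uw'i n) ∪
    {ug'h n, ug'hi n, ud' n, ud'i n})

end Uq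
/-! ## The Drinfel'd realization `𝒰_{r,s}(̂sl_n)` (Definition 3.1) -/

/-- the Drinfel'd generators. -/
inductive DGen (n : ℕ) : Type
  | xp : Fin (n-1) → ℤ → DGen n
  | xm : Fin (n-1) → ℤ → DGen n
  | am : Fin (n-1) → {l : ℤ // l ≠ 0} → DGen n
  | w : Fin (n-1) → DGen n
  | wi : Fin (n-1) → DGen n
  | w' : Fin (n-1) → DGen n
  | w'i : Fin (n-1) → DGen n
  | gh : DGen n
  | ghi : DGen n
  | g'h : DGen n
  | g'hi : DGen n
  | dd : DGen n
  | ddi : DGen n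
  | dd' : DGen n
  | dd'i : DGen n

namespace DGen

def toral {n : ℕ} : DGen n → Prop
  | .xp _ _ => False
  | .xm _ _ => False
  | .am _ _ => False
  | _ => True

def isGamma {n : ℕ} : DGen n → Prop
  | .gh => True
  | .ghi => True
  | .g'h => True
  | .g'hi => True
  | _ => False

def isOmega {n : ℕ} : DGen n → Prop
  | .w _ => True
  | .wi _ => True
  | .w' _ => True
  | .w'i _ => True
  | _ => False

def invPair {n : ℕ} : DGen n → DGen n → Prop
  | .w i, .wi j => i = j
  | .wi i, .w j => i = j
  | .w' i, .w'i j => i = j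
  | .w'i i, .w' j => i = j
  | .gh, .ghi => True
  | .ghi, .gh => True
  | .g'h, .g'hi => True
  | .g'hi, .g'h => True
  | .dd, .ddi => True
  | .ddi, .dd => True
  | .dd', .dd'i => True
  | .dd'i, .dd' => True
  | _, _ => False

end DGen

namespace Dpre

/-- the free algebra on the Drinfel'd generators. -/
abbrev FD (n : ℕ) := FreeAlgebra Kf (DGen n)

variable (n : ℕ)

def XP (i : Fin (n-1)) (k : ℤ) : FD n := FreeAlgebra.ι Kf (DGen.xp i k)
def XM (i : Fin (n-1)) (k : ℤ) : FD n := FreeAlgebra.ι Kf (DGen.xm i k)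
def Am (i : Fin (n-1)) (l : ℤ) (hl : l ≠ 0) : FD n := FreeAlgebra.ι Kf (DGen.am i ⟨l, hl⟩)
def W (i : Fin (n-1)) : FD n := FreeAlgebra.ι Kf (DGen.w i)
def W' (i : Fin (n-1)) : FD n := FreeAlgebra.ι Kf (DGen.w' i)
def Gh : FD n := FreeAlgebra.ι Kf DGen.gh
def Ghi : FD n := FreeAlgebra.ι Kf DGen.ghi
def G'h : FD n := FreeAlgebra.ι Kf DGen.g'h
def G'hi : FD n := FreeAlgebra.ι Kf DGen.g'hi
def Dd : FD n := FreeAlgebra.ι Kf DGen.dd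
def Dd' : FD n := FreeAlgebra.ι Kf DGen.dd'

/-- `ω_i(m)`, the coefficient of `z^{-m}` in `ω_i exp((r-s) ∑_{ℓ≥1} a_i(ℓ) z^{-ℓ})`. -/
def OmP (i : Fin (n-1)) (m : ℕ) : FD n :=
  W n i * expCoeff (fun l => if hl : (l : ℤ) = 0 then 0 else (rr - ss) • Am n i l hl) m

/-- `ω_i'(-m)`, the coefficient of `z^{m}` in `ω_i' exp(-(r-s) ∑_{ℓ≥1} a_i(-ℓ) z^{ℓ})`. -/
def OmM (i : Fin (n-1)) (m : ℕ) : FD n :=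
  W' n i * expCoeff (fun l => if hl : (-l : ℤ) = 0 then 0 else (-(rr - ss)) • Am n i (-l) hl) m

/-- `ω_i(m)` for `m ∈ ℤ`, with `ω_i(-m) = 0` for `m > 0`. -/
def OmZ (i : Fin (n-1)) (m : ℤ) : FD n := if 0 ≤ m then OmP n i m.toNat else 0

/-- `ω_i'(m)` for `m ∈ ℤ`, with `ω_i'(m) = 0` for `m > 0`. -/
def OmZ' (i : Fin (n-1)) (m : ℤ) : FD n := if m ≤ 0 then OmM n i (-m).toNat else 0

end Dpre

open Dpre in
/-- the defining relations (D1)–(D9) of the Drinfel'd realization. -/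
inductive DRel (n : ℕ) : Dpre.FD n → Dpre.FD n → Prop
  -- (D1)
  | inv (g h : DGen n) (hp : g.invPair h) :
      DRel n (FreeAlgebra.ι Kf g * FreeAlgebra.ι Kf h) 1
  | toralComm (g h : DGen n) (hg : g.toral) (hh : h.toral) :
      DRel n (FreeAlgebra.ι Kf g * FreeAlgebra.ι Kf h) (FreeAlgebra.ι Kf h * FreeAlgebra.ι Kf g)
  | gammaCentral (c g : DGen n) (hc : c.isGamma) :
      DRel n (FreeAlgebra.ι Kf c * FreeAlgebra.ι Kf g) (FreeAlgebra.ι Kf g * FreeAlgebra.ι Kf c)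
  | gammaGamma' : DRel n (Gh n * Gh n * (G'h n * G'h n)) ((rr * ss) • 1)
  -- (D2)
  | d2 (i j : Fin (n-1)) (l l' : ℤ) (hl : l ≠ 0) (hl' : l' ≠ 0) :
      DRel n (Am n i l hl * Am n j l' hl' - Am n j l' hl' * Am n i l hl)
        (if l + l' = 0 then
          (braceC i j l |l| * (rr - ss)⁻¹) • (zpw (Gh n) (Ghi n) (2*|l|) - zpw (G'h n) (G'hi n) (2*|l|))
         else 0)
  -- (D3)
  | d3 (i : Fin (n-1)) (l : ℤ) (hl : l ≠ 0) (g : DGen n) (hg : g.isOmega) :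
      DRel n (Am n i l hl * FreeAlgebra.ι Kf g) (FreeAlgebra.ι Kf g * Am n i l hl)
  -- (D4)
  | d4xp (i : Fin (n-1)) (k : ℤ) : DRel n (Dd n * XP n i k) (rr ^ k • (XP n i k * Dd n))
  | d4xm (i : Fin (n-1)) (k : ℤ) : DRel n (Dd n * XM n i k) (rr ^ k • (XM n i k * Dd n))
  | d4a (i : Fin (n-1)) (l : ℤ) (hl : l ≠ 0) :
      DRel n (Dd n * Am n i l hl) (rr ^ l • (Am n i l hl * Dd n))
  | d4'xp (i : Fin (n-1)) (k : ℤ) : DRel n (Dd' n * XP n i k) (ss ^ k • (XP n i k * Dd' n))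
  | d4'xm (i : Fin (n-1)) (k : ℤ) : DRel n (Dd' n * XM n i k) (ss ^ k • (XM n i k * Dd' n))
  | d4'a (i : Fin (n-1)) (l : ℤ) (hl : l ≠ 0) :
      DRel n (Dd' n * Am n i l hl) (ss ^ l • (Am n i l hl * Dd' n))
  -- (D5)
  | d5wp (i j : Fin (n-1)) (k : ℤ) :
      DRel n (W n i * XP n j k) (pr j i • (XP n j k * W n i))
  | d5wm (i j : Fin (n-1)) (k : ℤ) :
      DRel n (W n i * XM n j k) ((pr j i)⁻¹ • (XM n j k * W n i))
  | d5w'p (i j : Fin (n-1)) (k : ℤ) :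
      DRel n (W' n i * XP n j k) ((pr i j)⁻¹ • (XP n j k * W' n i))
  | d5w'm (i j : Fin (n-1)) (k : ℤ) :
      DRel n (W' n i * XM n j k) (pr i j • (XM n j k * W' n i))
  -- (D6)
  | d6np (i j : Fin (n-1)) (l k : ℤ) (hl : l < 0) :
      DRel n (Am n i l hl.ne * XP n j k - XP n j k * Am n i l hl.ne)
        (braceC i j l l • (zpw (Gh n) (Ghi n) l * XP n j (l+k)))
  | d6nm (i j : Fin (n-1)) (l k : ℤ) (hl : l < 0) :
      DRel n (Am n i l hl.ne * XM n j k - XM n j k * Am n i l hl.ne)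
        ((-(braceC i j l l)) • (zpw (Gh n) (Ghi n) (-l) * XM n j (l+k)))
  | d6pp (i j : Fin (n-1)) (l k : ℤ) (hl : 0 < l) :
      DRel n (Am n i l hl.ne' * XP n j k - XP n j k * Am n i l hl.ne')
        (braceC i j l l • (zpw (G'h n) (G'hi n) l * XP n j (l+k)))
  | d6pm (i j : Fin (n-1)) (l k : ℤ) (hl : 0 < l) :
      DRel n (Am n i l hl.ne' * XM n j k - XM n j k * Am n i l hl.ne')
        ((-(braceC i j l l)) • (zpw (G'h n) (G'hi n) (-l) * XM n j (l+k)))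
  -- (D7)
  | d7p (i j : Fin (n-1)) (k k' : ℤ) :
      DRel n (XP n i (k+1) * XP n j k' - pr j i • (XP n j k' * XP n i (k+1))
          + (prH j i * (prH i j)⁻¹) • (XP n j (k'+1) * XP n i k - pr i j • (XP n i k * XP n j (k'+1)))) 0
  | d7m (i j : Fin (n-1)) (k k' : ℤ) :
      DRel n (XM n i (k+1) * XM n j k' - (pr j i)⁻¹ • (XM n j k' * XM n i (k+1))
          + ((prH j i)⁻¹ * prH i j) • (XM n j (k'+1) * XM n i k - (pr i j)⁻¹ • (XM n i k * XM n j (k'+1)))) 0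
  -- (D8)
  | d8 (i j : Fin (n-1)) (k k' : ℤ) :
      DRel n (XP n i k * XM n j k' - XM n j k' * XP n i k)
        (if i = j then
          (rr - ss)⁻¹ • (zpw (G'h n) (G'hi n) (-2*k) * zpw (Gh n) (Ghi n) (-(k+k')) * OmZ n i (k+k')
            - zpw (Gh n) (Ghi n) (2*k') * zpw (G'h n) (G'hi n) (k+k') * OmZ' n i (k+k'))
         else 0)
  -- (D9₁)
  | d91p (i j : Fin (n-1)) (h : aC i j = 0) (m k : ℤ) :
      DRel n (XP n i m * XP n j k) (XP n j k * XP n i m)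
  | d91m (i j : Fin (n-1)) (h : aC i j = 0) (m k : ℤ) :
      DRel n (XM n i m * XM n j k) (XM n j k * XM n i m)
  -- (D9₂)
  | d92p (i j : Fin (n-1)) (h : aC i j = -1) (hij : (i : ℕ) < j) (m1 m2 k : ℤ) :
      DRel n ((XP n i m1 * XP n i m2 * XP n j k - (rr + ss) • (XP n i m1 * XP n j k * XP n i m2)
          + (rr * ss) • (XP n j k * XP n i m1 * XP n i m2))
        + (XP n i m2 * XP n i m1 * XP n j k - (rr + ss) • (XP n i m2 * XP n j k * XP n i m1)
          + (rr * ss) • (XP n j k * XP n i m2 * XP n i m1))) 0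
  | d92m (i j : Fin (n-1)) (h : aC i j = -1) (hij : (i : ℕ) < j) (m1 m2 k : ℤ) :
      DRel n ((XM n i m1 * XM n i m2 * XM n j k - (rr⁻¹ + ss⁻¹) • (XM n i m1 * XM n j k * XM n i m2)
          + (rr * ss)⁻¹ • (XM n j k * XM n i m1 * XM n i m2))
        + (XM n i m2 * XM n i m1 * XM n j k - (rr⁻¹ + ss⁻¹) • (XM n i m2 * XM n j k * XM n i m1)
          + (rr * ss)⁻¹ • (XM n j k * XM n i m2 * XM n i m1))) 0
  -- (D9₃)
  | d93p (i j : Fin (n-1)) (h : aC i j = -1) (hij : (j : ℕ) < i) (m1 m2 k : ℤ) :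
      DRel n ((XP n i m1 * XP n i m2 * XP n j k - (rr⁻¹ + ss⁻¹) • (XP n i m1 * XP n j k * XP n i m2)
          + (rr * ss)⁻¹ • (XP n j k * XP n i m1 * XP n i m2))
        + (XP n i m2 * XP n i m1 * XP n j k - (rr⁻¹ + ss⁻¹) • (XP n i m2 * XP n j k * XP n i m1)
          + (rr * ss)⁻¹ • (XP n j k * XP n i m2 * XP n i m1))) 0
  | d93m (i j : Fin (n-1)) (h : aC i j = -1) (hij : (j : ℕ) < i) (m1 m2 k : ℤ) :
      DRel n ((XM n i m1 * XM n i m2 * XM n j k - (rr + ss) • (XM n i m1 * XM n j k * XM n i m2)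
          + (rr * ss) • (XM n j k * XM n i m1 * XM n i m2))
        + (XM n i m2 * XM n i m1 * XM n j k - (rr + ss) • (XM n i m2 * XM n j k * XM n i m1)
          + (rr * ss) • (XM n j k * XM n i m2 * XM n i m1))) 0

/-- the Drinfel'd realization `𝒰_{r,s}(̂sl_n)`. -/
abbrev DU (n : ℕ) := RingQuot (DRel n)

namespace DU

variable (n : ℕ)

/-- the canonical projection. -/
def mk : Dpre.FD n →ₐ[Kf] DU n := RingQuot.mkAlgHom Kf (DRel n)

def uxp (i : Fin (n-1)) (k : ℤ) : DU n := mk n (Dpre.XP n i k)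
def uxm (i : Fin (n-1)) (k : ℤ) : DU n := mk n (Dpre.XM n i k)
def ua (i : Fin (n-1)) (l : ℤ) (hl : l ≠ 0) : DU n := mk n (Dpre.Am n i l hl)
def uw (i : Fin (n-1)) : DU n := mk n (Dpre.W n i)
def uwi (i : Fin (n-1)) : DU n := mk n (FreeAlgebra.ι Kf (DGen.wi i))
def uw' (i : Fin (n-1)) : DU n := mk n (Dpre.W' n i)
def uw'i (i : Fin (n-1)) : DU n := mk n (FreeAlgebra.ι Kf (DGen.w'i i))
def ugh : DU n := mk n (Dpre.Gh n)
def ughi : DU n := mk n (Dpre.Ghi n)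
def ug'h : DU n := mk n (Dpre.G'h n)
def ug'hi : DU n := mk n (Dpre.G'hi n)
def ud : DU n := mk n (Dpre.Dd n)
def udi : DU n := mk n (FreeAlgebra.ι Kf DGen.ddi)
def ud' : DU n := mk n (Dpre.Dd' n)
def ud'i : DU n := mk n (FreeAlgebra.ι Kf DGen.dd'i)

def uγ : DU n := ugh n * ugh n
def uγi : DU n := ughi n * ughi n
def uγ' : DU n := ug'h n * ug'h n
def uγ'i : DU n := ug'hi n * ug'hi n

/-- `ω_i(m)` in `𝒰`. -/
def uOm (i : Fin (n-1)) (m : ℕ) : DU n := mk n (Dpre.OmP n i m)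
/-- `ω_i'(-m)` in `𝒰`. -/
def uOm' (i : Fin (n-1)) (m : ℕ) : DU n := mk n (Dpre.OmM n i m)

/-- `x_t^+(k)` indexed by the actual index `t ∈ {1, …, n-1}` (junk value `0` otherwise). -/
def xg (t : ℕ) (k : ℤ) : DU n :=
  if h : 1 ≤ t ∧ t - 1 < n - 1 then uxp n ⟨t-1, h.2⟩ k else 0

/-- `x_t^-(k)` indexed by the actual index `t ∈ {1, …, n-1}` (junk value `0` otherwise). -/
def xmg (t : ℕ) (k : ℤ) : DU n :=
  if h : 1 ≤ t ∧ t - 1 < n - 1 then uxm n ⟨t-1, h.2⟩ k else 0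

/-- the quantum affine root vector `x^+_{α_{ab}}(k)`
 `= [⋯[[x_a^+(k), x_{a+1}^+(0)]_r, x_{a+2}^+(0)]_r, …, x_{b-1}^+(0)]_r`. -/
def xRootP (a : ℕ) (k : ℤ) (b : ℕ) : DU n :=
  nestL rr (fun t => if t = a then xg n t k else xg n t 0) a b

/-- the quantum affine root vector `x^-_{α_{ab}}(k)`
 `= [x_{b-1}^-(0), …, [x_{a+2}^-(0), [x_{a+1}^-(0), x_a^-(k)]_s]_s ⋯]_s`. -/
def xRootM (a : ℕ) (k : ℤ) (b : ℕ) : DU n :=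
  nestR ss (fun t => if t = a then xmg n t k else xmg n t 0) a b

/-- `ω_t` indexed by the actual index `t ∈ {1, …, n-1}`. -/
def wg (t : ℕ) : DU n := if h : 1 ≤ t ∧ t - 1 < n - 1 then uw n ⟨t-1, h.2⟩ else 1
/-- `ω_t⁻¹` indexed by the actual index. -/
def wgi (t : ℕ) : DU n := if h : 1 ≤ t ∧ t - 1 < n - 1 then uwi n ⟨t-1, h.2⟩ else 1
/-- `ω_t'` indexed by the actual index. -/
def w'g (t : ℕ) : DU n := if h : 1 ≤ t ∧ t - 1 < n - 1 then uw' n ⟨t-1, h.2⟩ else 1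
/-- `ω_t'⁻¹` indexed by the actual index. -/
def w'gi (t : ℕ) : DU n := if h : 1 ≤ t ∧ t - 1 < n - 1 then uw'i n ⟨t-1, h.2⟩ else 1
/-- `a_t(ℓ)` indexed by the actual index. -/
def ag (t : ℕ) (l : ℤ) (hl : l ≠ 0) : DU n :=
  if h : 1 ≤ t ∧ t - 1 < n - 1 then ua n ⟨t-1, h.2⟩ l hl else 0

/-- `ω_θ = ω_1 ⋯ ω_{n-1}`. -/
def uωθ : DU n := ((List.finRange (n-1)).map (uw n)).prod
def uωθi : DU n := ((List.finRange (n-1)).map (uwi n)).prod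
def uωθ' : DU n := ((List.finRange (n-1)).map (uw' n)).prod
def uωθ'i : DU n := ((List.finRange (n-1)).map (uw'i n)).prod

/-- `E_0 = x_θ^-(1) ⋅ γ'^{-1} ω_θ^{-1}`. -/
def E0 : DU n := xRootM n 1 1 n * (uγ'i n * uωθi n)
/-- `F_0 = γ^{-1} ω_θ'^{-1} ⋅ x_θ^+(-1)`. -/
def F0 : DU n := (uγi n * uωθ'i n) * xRootP n 1 (-1) n

/-- `E_i = x_i^+(0)`, `F_i = x_i^-(0)` for `i ∈ I`, together with `E_0`, `F_0`;
indexed by `I₀ = {0, 1, …, n-1}`. -/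
def Egen (t : ℕ) : DU n := if t = 0 then E0 n else xg n t 0
def Fgen (t : ℕ) : DU n := if t = 0 then F0 n else xmg n t 0

/-- the subalgebra `𝒰'` generated by the `E_i, F_i (i ∈ I₀)`, the toral generators and
`γ^{±1/2}, γ'^{±1/2}, D^{±1}, D'^{±1}`. -/
def Uprime : Subalgebra Kf (DU n) := Algebra.adjoin Kf
  ((Egen n '' (Set.Iio n)) ∪ (Fgen n '' (Set.Iio n)) ∪
    Set.range (uw n) ∪ Set.range (uwi n) ∪ Set.range (uw' n) ∪ Set.range (uw'i n) ∪
    {ugh n, ughi n, ug'h n, ug'hi n, ud n, udi n, ud' n, ud'i n})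

/-- the subalgebra `𝒰(ñ)` generated by all `x_i^+(k)`. -/
def DNplus : Subalgebra Kf (DU n) := Algebra.adjoin Kf
  {u | ∃ (i : Fin (n-1)) (k : ℤ), u = uxp n i k}

/-- the subalgebra `𝒰(ñ⁻)` generated by all `x_i^-(k)`. -/
def DNminus : Subalgebra Kf (DU n) := Algebra.adjoin Kf
  {u | ∃ (i : Fin (n-1)) (k : ℤ), u = uxm n i k}

end DU

/-! Write `X_b = x⁻_{α_{1b}}(1)`, so `X_2 = x₁⁻(1)` and `X_{b+1} = [x_b⁻(0), X_b]_s`. Since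
`x_i⁻(0)` commutes with `x_b⁻(0)` for `b ≥ i + 2`, a vanishing bracket `[x_i⁻(0), X_b]_c` stays
zero as `b` grows, so only the first relevant `b` matters. For `i ≥ 2`, induction on `t` from
the Serre relation (D9₃) gives `[x_t⁻(0), [x_t⁻(0), X_t]_s]_r = 0`, which is the case `i = n - 1`;
for `1 < i < n - 1` it combines with the Serre relation between `x_i⁻(0)` and `x_{i+1}⁻(0)` to
kill `[x_i⁻(0), X_{i+2}]_1`. For `i = 1`, the mixed Serre relation (D9₂) for `x₁⁻(0), x₁⁻(1),
x₂⁻(0)` together with (D7) for `x₁⁻(0), x₁⁻(1)` kills `[x₁⁻(0), X_3]_{s⁻¹}`. The scalar `c_i`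
only involves the `⟨i, j⟩` with `|i - j| ≤ 1`. -/

lemma rh_ne_zero : rh ≠ 0 := by
  rw [rh, map_ne_zero_iff _ (IsFractionRing.injective (MvPolynomial (Fin 2) ℚ) Kf)]
  exact MvPolynomial.X_ne_zero 0

lemma sh_ne_zero : sh ≠ 0 := by
  rw [sh, map_ne_zero_iff _ (IsFractionRing.injective (MvPolynomial (Fin 2) ℚ) Kf)]
  exact MvPolynomial.X_ne_zero 1

lemma rr_ne_zero : rr ≠ 0 := pow_ne_zero 2 rh_ne_zero

lemma ss_ne_zero : ss ≠ 0 := pow_ne_zero 2 sh_ne_zero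

lemma rr_add_ss_ne_zero : rr + ss ≠ 0 := by
  have h : rr + ss = algebraMap (MvPolynomial (Fin 2) ℚ) Kf
      (MvPolynomial.X 0 ^ 2 + MvPolynomial.X 1 ^ 2) := by
    simp [rr, ss, rh, sh]
  rw [h, map_ne_zero_iff _ (IsFractionRing.injective (MvPolynomial (Fin 2) ℚ) Kf)]
  intro h0
  simpa using congrArg (MvPolynomial.eval fun _ => (1 : ℚ)) h0

lemma pr_self (a : ℤ) : pr a a = rr * ss⁻¹ := by
  rw [pr, prH, if_pos rfl, mul_pow, inv_pow, rr, ss]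

lemma pr_add_one (a : ℤ) : pr a (a + 1) = rr⁻¹ := by
  rw [pr, prH, if_neg (by omega), if_pos rfl, inv_pow, rr]

lemma pr_sub_one (a : ℤ) : pr a (a - 1) = ss := by
  rw [pr, prH, if_neg (by omega), if_neg (by omega), if_pos rfl, ss]

lemma pr_of_far {a b : ℤ} (h : a + 2 ≤ b ∨ b + 2 ≤ a) : pr a b = 1 := by
  rw [pr, prH, if_neg (by omega), if_neg (by omega), if_neg (by omega), one_pow]

lemma prod_pr_eq_prod_inter (s : Finset ℕ) (i : ℕ) :
    ∏ j ∈ s, pr i j = ∏ j ∈ s ∩ {i - 1, i, i + 1}, pr i j := by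
  refine (Finset.prod_subset Finset.inter_subset_left fun j hj hj' => pr_of_far ?_).symm
  simp only [Finset.mem_inter, Finset.mem_insert, Finset.mem_singleton, not_and] at hj'
  have := hj' hj
  omega

lemma prod_pr_Icc {n i : ℕ} (hn : 2 < n) (hi1 : 1 ≤ i) (hi2 : i ≤ n - 1) :
    ∏ j ∈ Finset.Icc 1 (n - 1), pr (i : ℤ) (j : ℤ) =
      if i = 1 then ss⁻¹ else if i = n - 1 then rr else 1 := by
  rw [prod_pr_eq_prod_inter]
  split_ifs with h1 hlast
  · subst h1
    rw [show Finset.Icc 1 (n - 1) ∩ {1 - 1, 1, 1 + 1} = {1, 2} by ext; simp; omega,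
      Finset.prod_pair (by norm_num), Nat.cast_one, pr_self, show ((2 : ℕ) : ℤ) = 1 + 1 by rfl,
      pr_add_one, mul_right_comm, mul_inv_cancel₀ rr_ne_zero, one_mul]
  · rw [show Finset.Icc 1 (n - 1) ∩ {i - 1, i, i + 1} = {i - 1, i} by ext; simp; omega,
      Finset.prod_pair (by omega)]
    push_cast [hi1]
    rw [pr_self, pr_sub_one, ← mul_assoc, mul_comm ss, mul_assoc, mul_inv_cancel₀ ss_ne_zero,
      mul_one]
  · rw [show Finset.Icc 1 (n - 1) ∩ {i - 1, i, i + 1} = {i - 1, i, i + 1} by ext; simp; omega,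
      Finset.prod_insert (by simp; omega), Finset.prod_pair (by omega)]
    push_cast [hi1]
    rw [pr_self, pr_sub_one, pr_add_one]
    field_simp [rr_ne_zero, ss_ne_zero]

-- `module` needs the canonical ℕ- and ℤ-algebra structures on `Kf`: the instances found by
-- default (through `OreLocalization`) do not unfold to them at reducible transparency.
attribute [local instance] Semiring.toNatAlgebra Ring.toIntAlgebra

section TwistedBracket

variable {A : Type} [Ring A] [Algebra Kf A]

lemma qbr_zero_left (q : Kf) (x : A) : qbr q 0 x = 0 := by simp [qbr]

lemma qbr_zero_right (q : Kf) (x : A) : qbr q x 0 = 0 := by simp [qbr]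

lemma Commute.qbr_right {u x y : A} (q : Kf) (hx : Commute u x) (hy : Commute u y) :
    Commute u (qbr q x y) :=
  (hx.mul_right hy).sub_right ((hy.mul_right hx).smul_right q)

lemma qbr_left_comm (p q : Kf) {u v : A} (w : A) (h : Commute u v) :
    qbr p u (qbr q v w) = qbr q v (qbr p u w) := by
  simp only [qbr, mul_sub, sub_mul, smul_sub, mul_smul_comm, smul_mul_assoc, smul_smul,
    mul_assoc, h.eq, h.left_comm]
  module

lemma qbr_assoc_of_commute (p q : Kf) {u w : A} (v : A) (h : Commute u w) :
    qbr p u (qbr q v w) = qbr q (qbr p u v) w := by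
  simp only [qbr, mul_sub, sub_mul, smul_sub, mul_smul_comm, smul_mul_assoc, smul_smul,
    mul_assoc, h.eq, h.left_comm]
  module

lemma qbr_qbr_add_qbr_qbr (p q : Kf) (u u' y : A) :
    qbr p u (qbr q u' y) + qbr p u' (qbr q u y) =
      u * (u' * y) - (p + q) • (u * (y * u')) + (p * q) • (y * (u * u'))
        + (u' * (u * y) - (p + q) • (u' * (y * u)) + (p * q) • (y * (u' * u))) := by
  simp only [qbr, mul_sub, sub_mul, smul_sub, mul_smul_comm, smul_mul_assoc, smul_smul, mul_assoc]
  module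

lemma qbr_one_qbr_qbr_eq_zero {ρ σ : Kf} (hρ : ρ ≠ 0) (hσ : σ ≠ 0) (hρσ : ρ + σ ≠ 0)
    {u y B : A} (hyB : Commute y B) (hy : qbr ρ⁻¹ u (qbr σ⁻¹ u y) = 0)
    (hB : qbr ρ u (qbr σ u B) = 0) :
    qbr 1 u (qbr σ y (qbr σ u B)) = 0 := by
  have key : (ρ + σ) • qbr 1 u (qbr σ y (qbr σ u B)) =
      (ρ * σ) • (σ ^ 2 • (B * qbr ρ⁻¹ u (qbr σ⁻¹ u y)) - qbr ρ⁻¹ u (qbr σ⁻¹ u y) * B)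
      + (y * qbr ρ u (qbr σ u B) - σ ^ 2 • (qbr ρ u (qbr σ u B) * y)) := by
    simp only [qbr, mul_sub, sub_mul, smul_sub, add_mul, mul_smul_comm,
      smul_mul_assoc, smul_smul, one_smul, mul_assoc, hyB.eq, hyB.left_comm]
    match_scalars <;> field_simp <;> ring
  rw [hy, hB] at key
  simpa [hρσ] using key

lemma qbr_inv_qbr_eq_zero {ρ σ : Kf} (hρ : ρ ≠ 0) (hσ : σ ≠ 0) (hρσ : ρ + σ ≠ 0)
    {u v w : A} (hwu : w * u = (σ * ρ⁻¹) • (u * w))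
    (h : qbr ρ⁻¹ u (qbr σ⁻¹ w v) + qbr ρ⁻¹ w (qbr σ⁻¹ u v) = 0) :
    qbr σ⁻¹ u (qbr σ v w) = 0 := by
  have hwu' : ∀ z : A, w * (u * z) = (σ * ρ⁻¹) • (u * (w * z)) := fun z => by
    rw [← mul_assoc, hwu, smul_mul_assoc, mul_assoc]
  have key : (ρ + σ) • qbr σ⁻¹ u (qbr σ v w) =
      (-(ρ * σ)) • (qbr ρ⁻¹ u (qbr σ⁻¹ w v) + qbr ρ⁻¹ w (qbr σ⁻¹ u v)) := by
    simp only [qbr, mul_sub, sub_mul, smul_sub, smul_add, add_mul, mul_smul_comm,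
      smul_mul_assoc, smul_smul, mul_assoc, hwu, hwu']
    match_scalars <;> field_simp <;> ring
  rw [h, smul_zero] at key
  exact (smul_eq_zero.mp key).resolve_left hρσ

lemma commute_nestR (q : Kf) (g : ℕ → A) {a b : ℕ} (hab : a < b) {u : A}
    (h : ∀ t < b, Commute u (g t)) : Commute u (nestR q g a b) := by
  induction b with
  | zero => omega
  | succ b ih =>
    rw [nestR]
    split_ifs with hba
    · exact h a (by omega)
    · exact (h b (by omega)).qbr_right q (ih (by omega) fun t ht => h t (by omega))

end TwistedBracket

lemma aC_of_far {a b : ℕ} (h : a + 2 ≤ b ∨ b + 2 ≤ a) : aC a b = 0 := by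
  rw [aC, if_neg (by omega), if_neg (by omega)]

lemma aC_of_adj {a b : ℕ} (h : a + 1 = b ∨ b + 1 = a) : aC a b = -1 := by
  rw [aC, if_neg (by omega), if_pos (by omega)]

namespace DU

variable {n : ℕ}

lemma mk_eq_of_rel {x y : Dpre.FD n} (h : DRel n x y) : mk n x = mk n y :=
  RingQuot.mkAlgHom_rel Kf h

lemma commute_xmg_of_far {t t' : ℕ} (h : t + 2 ≤ t' ∨ t' + 2 ≤ t) (k k' : ℤ) :
    Commute (xmg n t k) (xmg n t' k') := by
  unfold xmg
  split_ifs with ht ht'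
  · have h := mk_eq_of_rel (DRel.d91m ⟨t - 1, ht.2⟩ ⟨t' - 1, ht'.2⟩
      (aC_of_far (a := t - 1) (b := t' - 1) (by omega)) k k')
    rwa [map_mul, map_mul] at h
  · exact Commute.zero_right _
  · exact Commute.zero_left _
  · exact Commute.zero_left _

lemma xmg_add_one_mul_xmg (t : ℕ) (k : ℤ) :
    xmg n t (k + 1) * xmg n t k = (ss * rr⁻¹) • (xmg n t k * xmg n t (k + 1)) := by
  unfold xmg
  split_ifs with ht
  · have h := mk_eq_of_rel (DRel.d7m ⟨t - 1, ht.2⟩ ⟨t - 1, ht.2⟩ k k)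
    simp only [map_add, map_sub, map_smul, map_mul, map_zero] at h
    have hprH : (prH (t - 1 : ℕ) (t - 1 : ℕ))⁻¹ * prH (t - 1 : ℕ) (t - 1 : ℕ) = 1 := by
      rw [prH, if_pos rfl]
      exact inv_mul_cancel₀ (mul_ne_zero rh_ne_zero (inv_ne_zero sh_ne_zero))
    rw [hprH, one_smul, ← two_smul Kf, smul_eq_zero, sub_eq_zero, pr_self, mul_inv, inv_inv,
      mul_comm] at h
    exact h.resolve_left two_ne_zero
  · simp

lemma qbr_xmg_qbr_xmg_pred (t : ℕ) (m k : ℤ) :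
    qbr rr (xmg n (t + 1) m) (qbr ss (xmg n (t + 1) m) (xmg n t k)) = 0 := by
  unfold xmg uxm
  split_ifs with ht ht'
  · have h := mk_eq_of_rel (DRel.d93m ⟨t + 1 - 1, ht.2⟩ ⟨t - 1, ht'.2⟩
      (aC_of_adj (a := t) (b := t - 1) (by omega)) (show t - 1 < t + 1 - 1 by omega) m m k)
    simp only [map_add, map_sub, map_smul, map_mul, map_zero, mul_assoc] at h
    refine (smul_eq_zero.mp ?_).resolve_left (two_ne_zero (α := Kf))
    rw [two_smul, qbr_qbr_add_qbr_qbr]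
    exact h
  all_goals simp [qbr]

lemma qbr_xmg_qbr_xmg_succ_add (t : ℕ) (m m' : ℤ) :
    qbr rr⁻¹ (xmg n t m) (qbr ss⁻¹ (xmg n t m') (xmg n (t + 1) 0))
      + qbr rr⁻¹ (xmg n t m') (qbr ss⁻¹ (xmg n t m) (xmg n (t + 1) 0)) = 0 := by
  unfold xmg uxm
  split_ifs with ht ht'
  · have h := mk_eq_of_rel (DRel.d92m ⟨t - 1, ht.2⟩ ⟨t + 1 - 1, ht'.2⟩
      (aC_of_adj (a := t - 1) (b := t) (by omega)) (show t - 1 < t + 1 - 1 by omega) m m' 0)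
    simp only [map_add, map_sub, map_smul, map_mul, map_zero, mul_assoc, mul_inv] at h
    rwa [qbr_qbr_add_qbr_qbr]
  all_goals simp [qbr]

lemma qbr_xmg_qbr_xmg_succ (t : ℕ) (m : ℤ) :
    qbr rr⁻¹ (xmg n t m) (qbr ss⁻¹ (xmg n t m) (xmg n (t + 1) 0)) = 0 := by
  have h := qbr_xmg_qbr_xmg_succ_add (n := n) t m m
  rwa [← two_smul Kf, smul_eq_zero, or_iff_right two_ne_zero] at h

lemma xRootM_two (k : ℤ) : xRootM n 1 k 2 = xmg n 1 k := by
  simp [xRootM, nestR]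

lemma xRootM_succ (k : ℤ) {b : ℕ} (hb : 2 ≤ b) :
    xRootM n 1 k (b + 1) = qbr ss (xmg n b 0) (xRootM n 1 k b) := by
  simp only [xRootM, nestR]
  rw [if_neg (by omega), if_neg (by omega)]

lemma commute_xmg_xRootM {t b : ℕ} (hb : 1 < b) (htb : b + 1 ≤ t) (k k' : ℤ) :
    Commute (xmg n t k) (xRootM n 1 k' b) :=
  commute_nestR _ _ hb fun t' ht' => by
    split_ifs <;> exact commute_xmg_of_far (by omega) _ _

lemma qbr_xmg_xRootM_eq_zero_of_le {q : Kf} {i b₀ : ℕ} (hi : i + 2 ≤ b₀) {k : ℤ}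
    (h : qbr q (xmg n i 0) (xRootM n 1 k b₀) = 0) {b : ℕ} (hb : b₀ ≤ b) :
    qbr q (xmg n i 0) (xRootM n 1 k b) = 0 := by
  induction b, hb using Nat.le_induction with
  | base => exact h
  | succ b hb ih =>
    rw [xRootM_succ k (by omega),
      qbr_left_comm _ _ _ (commute_xmg_of_far (by omega) 0 0), ih, qbr_zero_right]

lemma qbr_xmg_xRootM_succ {t : ℕ} (ht : 2 ≤ t) (k : ℤ) :
    qbr rr (xmg n t 0) (xRootM n 1 k (t + 1)) = 0 := by
  rw [xRootM_succ k ht]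
  obtain rfl | ht := eq_or_lt_of_le ht
  · rw [xRootM_two]
    exact qbr_xmg_qbr_xmg_pred 1 0 k
  · obtain ⟨s, rfl⟩ : ∃ s, t = s + 1 := ⟨t - 1, by omega⟩
    have hcomm := commute_xmg_xRootM (n := n) (t := s + 1) (b := s) (by omega) le_rfl 0 k
    rw [xRootM_succ k (by omega), qbr_assoc_of_commute ss ss _ hcomm,
      qbr_assoc_of_commute rr ss _ hcomm, qbr_xmg_qbr_xmg_pred, qbr_zero_left]

lemma qbr_xmg_one_xRootM {b : ℕ} (hb : 3 ≤ b) :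
    qbr ss⁻¹ (xmg n 1 0) (xRootM n 1 1 b) = 0 := by
  refine qbr_xmg_xRootM_eq_zero_of_le le_rfl ?_ hb
  rw [xRootM_succ 1 le_rfl, xRootM_two]
  refine qbr_inv_qbr_eq_zero rr_ne_zero ss_ne_zero rr_add_ss_ne_zero ?_ ?_
  · simpa using xmg_add_one_mul_xmg (n := n) 1 0
  · exact qbr_xmg_qbr_xmg_succ_add 1 0 1

lemma qbr_xmg_xRootM_of_lt {i b : ℕ} (hi : 2 ≤ i) (hb : i + 2 ≤ b) (k : ℤ) :
    qbr 1 (xmg n i 0) (xRootM n 1 k b) = 0 := by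
  refine qbr_xmg_xRootM_eq_zero_of_le le_rfl ?_ hb
  rw [xRootM_succ k (by omega), xRootM_succ k hi]
  refine qbr_one_qbr_qbr_eq_zero rr_ne_zero ss_ne_zero rr_add_ss_ne_zero
    (commute_xmg_xRootM (by omega) le_rfl 0 k) (qbr_xmg_qbr_xmg_succ i 0) ?_
  rw [← xRootM_succ k hi]
  exact qbr_xmg_xRootM_succ hi k

end DU

open DU in
/-- Lemma 4.4: `[x_i^-(0), x_θ^-(1)]_{⟨ω_i',ω_θ⟩} = 0` for `i ∈ I`,
where `⟨ω_i',ω_θ⟩ = ∏_{j∈I} ⟨i,j⟩` is explicitly `s⁻¹`, `r`, `1`. -/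
theorem stmt13 (n : ℕ) (hn : 2 < n) (i : ℕ) (hi1 : 1 ≤ i) (hi2 : i ≤ n - 1) :
    (∏ j ∈ Finset.Icc 1 (n-1), pr (i : ℤ) (j : ℤ)) =
      (if i = 1 then ss⁻¹ else if i = n - 1 then rr else 1) ∧
    qbr (∏ j ∈ Finset.Icc 1 (n-1), pr (i : ℤ) (j : ℤ)) (xmg n i 0) (xRootM n 1 1 n) = 0 := by
  have hprod := prod_pr_Icc hn hi1 hi2
  refine ⟨hprod, ?_⟩
  rw [hprod]
  split_ifs with h1 hlast
  · subst h1
    exact qbr_xmg_one_xRootM (by omega)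
  · obtain rfl : n = i + 1 := by omega
    exact qbr_xmg_xRootM_succ (by omega) 1
  · exact qbr_xmg_xRootM_of_lt (by omega) (by omega) 1
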